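/- For every N ≥ 1 and every h ∈ L²(0,1), N² Σ_{k=1}^N ⟨h, x^N_k⟩² ≤ 2 ‖h‖²_{L²(0,1)}, where ⟨·,·⟩ and ‖·‖ denote the inner product and norm of L²(0,1). -/

import Mathlib

open MeasureTheory

noncomputable section

/-- Extension of a configuration `φ ∈ ℝ^N` (indexed so that `φ ⟨i-1,_⟩` is the paper's `φ_i`,
`1 ≤ i ≤ N`) to all of `ℕ`, with the conventions `φ_0 = 0` and `φ_j = 0` for `j > N`. -/
def pad {N : ℕ} (φ : Fin N → ℝ) : ℕ → ℝ :=
  fun j => if hj : 1 ≤ j ∧ j ≤ N then φ ⟨j - 1, by omega⟩ else 0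

/-- The rescaled piecewise affine interpolation map `Φ_N`. -/
def affInterp (N : ℕ) (φ : Fin N → ℝ) : ℝ → ℝ := fun y =>
  (N : ℝ) ^ (-(1 / 2) : ℝ) * pad φ ⌊(N : ℝ) * y⌋₊ +
    (N : ℝ) ^ (-(1 / 2) : ℝ) * ((N : ℝ) * y - (⌊(N : ℝ) * y⌋₊ : ℝ)) *
      (pad φ (⌊(N : ℝ) * y⌋₊ + 1) - pad φ ⌊(N : ℝ) * y⌋₊)

theorem cs_weighted {μ : Measure ℝ} {f w : ℝ → ℝ} (hw : Integrable w μ)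
    (hfw : Integrable (fun y => f y * w y) μ) (hffw : Integrable (fun y => f y ^ 2 * w y) μ)
    (hw0 : 0 ≤ᵐ[μ] w) :
    (∫ y, f y * w y ∂μ) ^ 2 ≤ (∫ y, w y ∂μ) * ∫ y, f y ^ 2 * w y ∂μ := by
  have key : ∀ lam : ℝ,
      0 ≤ (∫ y, w y ∂μ) * (lam * lam) + (-(2 * ∫ y, f y * w y ∂μ)) * lam
        + ∫ y, f y ^ 2 * w y ∂μ := by
    intro lam
    have hsub : Integrable (fun y => f y ^ 2 * w y - 2 * lam * (f y * w y)) μ :=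
      hffw.sub (hfw.const_mul _)
    have h1 : (fun y => (f y - lam) ^ 2 * w y)
        = fun y => (f y ^ 2 * w y - 2 * lam * (f y * w y)) + lam ^ 2 * w y := by
      funext y; ring
    have h2 : (0:ℝ) ≤ ∫ y, (f y - lam) ^ 2 * w y ∂μ := by
      apply integral_nonneg_of_ae
      filter_upwards [hw0] with y hy
      exact mul_nonneg (sq_nonneg _) hy
    rw [h1, integral_add hsub (hw.const_mul _), integral_sub hffw (hfw.const_mul _),
      MeasureTheory.integral_const_mul, MeasureTheory.integral_const_mul] at h2
    nlinarith [h2]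
  have hd := discrim_le_zero key
  rw [discrim] at hd
  nlinarith [hd]

theorem pad_single {N : ℕ} (k : Fin N) (j : ℕ) :
    pad (Pi.single k (1:ℝ)) j = if j = (k : ℕ) + 1 then 1 else 0 := by
  unfold pad
  by_cases hj : 1 ≤ j ∧ j ≤ N
  · rw [dif_pos hj, Pi.single_apply]
    by_cases h2 : j = (k : ℕ) + 1
    · rw [if_pos h2, if_pos (by ext; simp; omega)]
    · rw [if_neg h2, if_neg (by intro hc; apply h2; have := Fin.mk.inj_iff.mp hc; omega)]
  · rw [dif_neg hj, if_neg (by intro hc; exact hj ⟨by omega, by have := k.2; omega⟩)]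

theorem sum_pad_single {N : ℕ} (j : ℕ) :
    ∑ k : Fin N, (if j = (k : ℕ) + 1 then (1:ℝ) else 0)
      = if 1 ≤ j ∧ j ≤ N then 1 else 0 := by
  by_cases hj : 1 ≤ j ∧ j ≤ N
  · rw [if_pos hj]
    have : ∀ k : Fin N, (if j = (k : ℕ) + 1 then (1:ℝ) else 0)
        = if k = (⟨j - 1, by omega⟩ : Fin N) then 1 else 0 := by
      intro k
      apply if_congr _ rfl rfl
      constructor
      · intro hc; ext; simp; omega
      · intro hc; have := Fin.mk.inj_iff.mp hc.symm; omega
    simp only [this]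
    simp
  · rw [if_neg hj]
    apply Finset.sum_eq_zero
    intro k _
    rw [if_neg]
    intro hc
    exact hj ⟨by omega, by have := k.2; omega⟩

/-- `N² Σ_{k=1}^N ⟨h, x^N_k⟩² ≤ 2 ‖h‖²` in `L²(0,1)`, where `x^N_k = Φ_N(e_k)`. -/
theorem hat_inner_products_bound (N : ℕ) (hN : 1 ≤ N) (h : ℝ → ℝ)
    (hh : MemLp h 2 (volume.restrict (Set.Ioc (0 : ℝ) 1))) :
    (N : ℝ) ^ 2 *
        ∑ k : Fin N, (∫ y in Set.Ioc (0 : ℝ) 1, h y * affInterp N (Pi.single k 1) y) ^ 2 ≤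
      2 * ∫ y in Set.Ioc (0 : ℝ) 1, h y ^ 2 := by
  set μ := volume.restrict (Set.Ioc (0 : ℝ) 1) with hμ
  set r := (N : ℝ) ^ (-(1 / 2) : ℝ) with hrdef
  have hN0 : (0:ℝ) < N := by exact_mod_cast hN
  have hr : 0 ≤ r := Real.rpow_nonneg (by positivity) _
  have hr2 : r * r = ((N:ℝ))⁻¹ := by
    rw [hrdef, ← Real.rpow_add hN0]
    norm_num [Real.rpow_neg_one]
  set g : Fin N → ℝ → ℝ := fun k => affInterp N (Pi.single k 1) with hgdef
  -- pointwise structure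
  have floor_facts : ∀ y ∈ Set.Ioc (0:ℝ) 1,
      (⌊(N:ℝ)*y⌋₊ : ℝ) ≤ (N:ℝ)*y ∧ (N:ℝ)*y < (⌊(N:ℝ)*y⌋₊ : ℝ) + 1 := by
    intro y hy
    exact ⟨Nat.floor_le (mul_nonneg (le_of_lt hN0) (le_of_lt hy.1)), Nat.lt_floor_add_one _⟩
  -- nonnegativity and pointwise bound
  have hg_nonneg : ∀ k : Fin N, ∀ y ∈ Set.Ioc (0:ℝ) 1, 0 ≤ g k y := by
    intro k y hy
    obtain ⟨hf1, hf2⟩ := floor_facts y hy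
    simp only [hgdef, affInterp, pad_single, ← hrdef]
    set m := ⌊(N:ℝ)*y⌋₊
    set t := (N:ℝ)*y - (m:ℝ) with htdef
    have ht0 : 0 ≤ t := by simp [htdef]; linarith
    have ht1 : t ≤ 1 := by simp [htdef]; linarith
    set A := (if m = (k:ℕ)+1 then (1:ℝ) else 0) with hA
    set B := (if m+1 = (k:ℕ)+1 then (1:ℝ) else 0) with hB
    have hA0 : 0 ≤ A ∧ A ≤ 1 := by rw [hA]; split <;> norm_num
    have hB0 : 0 ≤ B ∧ B ≤ 1 := by rw [hB]; split <;> norm_num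
    have : r * A + r * t * (B - A) = r * ((1-t)*A + t*B) := by ring
    rw [this]
    exact mul_nonneg hr (add_nonneg (mul_nonneg (by linarith) hA0.1) (mul_nonneg ht0 hB0.1))
  have hg_le : ∀ k : Fin N, ∀ y ∈ Set.Ioc (0:ℝ) 1, g k y ≤ r := by
    intro k y hy
    obtain ⟨hf1, hf2⟩ := floor_facts y hy
    simp only [hgdef, affInterp, pad_single, ← hrdef]
    set m := ⌊(N:ℝ)*y⌋₊
    set t := (N:ℝ)*y - (m:ℝ) with htdef
    have ht0 : 0 ≤ t := by simp [htdef]; linarith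
    have ht1 : t ≤ 1 := by simp [htdef]; linarith
    set A := (if m = (k:ℕ)+1 then (1:ℝ) else 0) with hA
    set B := (if m+1 = (k:ℕ)+1 then (1:ℝ) else 0) with hB
    have hA0 : 0 ≤ A ∧ A ≤ 1 := by rw [hA]; split <;> norm_num
    have hB0 : 0 ≤ B ∧ B ≤ 1 := by rw [hB]; split <;> norm_num
    nlinarith [mul_nonneg ht0 (sub_nonneg.mpr hB0.2), mul_nonneg (sub_nonneg.mpr ht1) (sub_nonneg.mpr hA0.2), hr]
  -- support bound
  have hg_indic : ∀ k : Fin N, ∀ y ∈ Set.Ioc (0:ℝ) 1,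
      g k y ≤ (Set.Ico ((k:ℝ)/N) (((k:ℝ)+2)/N)).indicator (fun _ => r) y := by
    intro k y hy
    by_cases hmem : y ∈ Set.Ico ((k:ℝ)/N) (((k:ℝ)+2)/N)
    · rw [Set.indicator_of_mem hmem]
      exact hg_le k y hy
    · rw [Set.indicator_of_notMem hmem]
      rw [Set.mem_Ico, not_and_or, not_le, not_lt] at hmem
      obtain ⟨hf1, hf2⟩ := floor_facts y hy
      have hzero : g k y = 0 := by
        simp only [hgdef, affInterp, pad_single, ← hrdef]
        set m := ⌊(N:ℝ)*y⌋₊ with hm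
        have hkne : m ≠ (k:ℕ)+1 ∧ m + 1 ≠ (k:ℕ)+1 := by
          rcases hmem with hlt | hge
          · have : (N:ℝ)*y < (k:ℕ) := by
              have := (lt_div_iff₀ hN0).mp hlt
              linarith
            have hmk : (m:ℝ) < (k:ℕ) := lt_of_le_of_lt hf1 this
            have : m < (k:ℕ) := by exact_mod_cast hmk
            omega
          · have : ((k:ℕ):ℝ) + 2 ≤ (N:ℝ)*y := by
              have := (div_le_iff₀ hN0).mp hge
              linarith
            have hmk : ((k:ℕ) + 2 : ℕ) ≤ m := by
              rw [hm]
              apply Nat.le_floor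
              push_cast
              linarith
            omega
        rw [if_neg hkne.1, if_neg hkne.2]
        ring
      rw [hzero]
  -- sum bound
  have hg_sum : ∀ y ∈ Set.Ioc (0:ℝ) 1, (∑ k : Fin N, g k y) ≤ r := by
    intro y hy
    obtain ⟨hf1, hf2⟩ := floor_facts y hy
    simp only [hgdef, affInterp, pad_single, ← hrdef]
    rw [Finset.sum_add_distrib, ← Finset.mul_sum, ← Finset.mul_sum, Finset.sum_sub_distrib,
      sum_pad_single, sum_pad_single]
    set m := ⌊(N:ℝ)*y⌋₊
    set t := (N:ℝ)*y - (m:ℝ) with htdef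
    have ht0 : 0 ≤ t := by simp [htdef]; linarith
    have ht1 : t ≤ 1 := by simp [htdef]; linarith
    set A := (if 1 ≤ m ∧ m ≤ N then (1:ℝ) else 0) with hA
    set B := (if 1 ≤ m+1 ∧ m+1 ≤ N then (1:ℝ) else 0) with hB
    have hA0 : 0 ≤ A ∧ A ≤ 1 := by rw [hA]; split <;> norm_num
    have hB0 : 0 ≤ B ∧ B ≤ 1 := by rw [hB]; split <;> norm_num
    nlinarith [mul_nonneg ht0 (sub_nonneg.mpr hB0.2), mul_nonneg (sub_nonneg.mpr ht1) (sub_nonneg.mpr hA0.2), hr]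
  -- measurability
  have hg_meas : ∀ k : Fin N, Measurable (g k) := by
    intro k
    have hfl : Measurable (fun y : ℝ => ⌊(N:ℝ)*y⌋₊) :=
      Nat.measurable_floor.comp (measurable_const.mul measurable_id)
    have h1 : Measurable (fun y : ℝ => pad (Pi.single k 1) ⌊(N:ℝ)*y⌋₊) :=
      Measurable.comp (measurable_from_top (f := pad (Pi.single k 1))) hfl
    have h2 : Measurable (fun y : ℝ => pad (Pi.single k 1) (⌊(N:ℝ)*y⌋₊ + 1)) :=
      Measurable.comp (measurable_from_top (f := fun n : ℕ => pad (Pi.single k 1) (n+1))) hfl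
    have h3 : Measurable (fun y : ℝ => ((⌊(N:ℝ)*y⌋₊ : ℕ) : ℝ)) :=
      Measurable.comp (measurable_from_top (f := fun n : ℕ => (n : ℝ))) hfl
    exact ((h1.const_mul r).add
      ((((measurable_const.mul measurable_id).sub h3).const_mul r).mul (h2.sub h1)))
  -- integrability
  haveI : IsFiniteMeasure μ := by
    constructor
    rw [hμ, Measure.restrict_apply_univ]
    exact measure_Ioc_lt_top
  have hh1 : Integrable h μ := hh.integrable one_le_two
  have hsq : Integrable (fun y => h y ^ 2) μ := hh.integrable_sq
  have hae : ∀ᵐ y ∂μ, y ∈ Set.Ioc (0:ℝ) 1 := ae_restrict_mem measurableSet_Ioc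
  have hgint : ∀ k : Fin N, Integrable (g k) μ := by
    intro k
    apply Integrable.mono' (integrable_const r) (hg_meas k).aestronglyMeasurable
    filter_upwards [hae] with y hy
    rw [Real.norm_eq_abs, abs_of_nonneg (hg_nonneg k y hy)]
    exact hg_le k y hy
  have hfw : ∀ k : Fin N, Integrable (fun y => h y * g k y) μ := by
    intro k
    have := Integrable.bdd_mul (c := r) hh1 (hg_meas k).aestronglyMeasurable
      (by filter_upwards [hae] with y hy;
          rw [Real.norm_eq_abs, abs_of_nonneg (hg_nonneg k y hy)]; exact hg_le k y hy)
    exact this.congr (Filter.Eventually.of_forall fun y => mul_comm _ _)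
  have hffw : ∀ k : Fin N, Integrable (fun y => h y ^ 2 * g k y) μ := by
    intro k
    have := Integrable.bdd_mul (c := r) hsq (hg_meas k).aestronglyMeasurable
      (by filter_upwards [hae] with y hy;
          rw [Real.norm_eq_abs, abs_of_nonneg (hg_nonneg k y hy)]; exact hg_le k y hy)
    exact this.congr (Filter.Eventually.of_forall fun y => mul_comm _ _)
  -- integral of g k is at most (2/N) * r
  have hA : ∀ k : Fin N, ∫ y, g k y ∂μ ≤ 2 / N * r := by
    intro k
    have hind : Integrable ((Set.Ico ((k:ℝ)/N) (((k:ℝ)+2)/N)).indicator (fun _ => r)) μ :=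
      (integrable_const r).indicator measurableSet_Ico
    have h1 : ∫ y, g k y ∂μ
        ≤ ∫ y, (Set.Ico ((k:ℝ)/N) (((k:ℝ)+2)/N)).indicator (fun _ => r) y ∂μ := by
      apply integral_mono_ae (hgint k) hind
      filter_upwards [hae] with y hy
      exact hg_indic k y hy
    have h2 : ∫ y, (Set.Ico ((k:ℝ)/N) (((k:ℝ)+2)/N)).indicator (fun _ => r) y ∂μ
        = (μ (Set.Ico ((k:ℝ)/N) (((k:ℝ)+2)/N))).toReal * r := by
      rw [integral_indicator_const _ measurableSet_Ico]; simp [smul_eq_mul, measureReal_def]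
    have h3 : (μ (Set.Ico ((k:ℝ)/N) (((k:ℝ)+2)/N))).toReal ≤ 2 / N := by
      have hle : μ (Set.Ico ((k:ℝ)/N) (((k:ℝ)+2)/N))
          ≤ volume (Set.Ico ((k:ℝ)/N) (((k:ℝ)+2)/N)) := by
        rw [hμ]
        exact Measure.restrict_le_self _
      have hvol : volume (Set.Ico ((k:ℝ)/N) (((k:ℝ)+2)/N)) = ENNReal.ofReal (2 / N) := by
        rw [Real.volume_Ico]
        congr 1
        field_simp
        ring
      calc (μ (Set.Ico ((k:ℝ)/N) (((k:ℝ)+2)/N))).toReal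
          ≤ (volume (Set.Ico ((k:ℝ)/N) (((k:ℝ)+2)/N))).toReal := by
            apply ENNReal.toReal_mono _ hle
            rw [hvol]; exact ENNReal.ofReal_ne_top
        _ = 2 / N := by rw [hvol, ENNReal.toReal_ofReal (by positivity)]
    calc ∫ y, g k y ∂μ ≤ (μ (Set.Ico ((k:ℝ)/N) (((k:ℝ)+2)/N))).toReal * r := by rw [← h2]; exact h1
      _ ≤ 2 / N * r := mul_le_mul_of_nonneg_right h3 hr
  -- per k Cauchy-Schwarz
  have hCk_nonneg : ∀ k : Fin N, 0 ≤ ∫ y, h y ^ 2 * g k y ∂μ := by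
    intro k
    apply integral_nonneg_of_ae
    filter_upwards [hae] with y hy
    exact mul_nonneg (sq_nonneg _) (hg_nonneg k y hy)
  have hperk : ∀ k : Fin N, (∫ y, h y * g k y ∂μ) ^ 2 ≤ 2 / N * r * ∫ y, h y ^ 2 * g k y ∂μ := by
    intro k
    calc (∫ y, h y * g k y ∂μ) ^ 2 ≤ (∫ y, g k y ∂μ) * ∫ y, h y ^ 2 * g k y ∂μ :=
          cs_weighted (hgint k) (hfw k) (hffw k)
            (by filter_upwards [hae] with y hy; exact hg_nonneg k y hy)
      _ ≤ 2 / N * r * ∫ y, h y ^ 2 * g k y ∂μ :=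
          mul_le_mul_of_nonneg_right (hA k) (hCk_nonneg k)
  -- sum of the weighted second moments
  have hsum : ∑ k : Fin N, ∫ y, h y ^ 2 * g k y ∂μ ≤ (∫ y, h y ^ 2 ∂μ) * r := by
    have e1 : ∑ k : Fin N, ∫ y, h y ^ 2 * g k y ∂μ = ∫ y, h y ^ 2 * ∑ k : Fin N, g k y ∂μ := by
      rw [← integral_finset_sum _ (fun k _ => hffw k)]
      congr 1
      funext y
      rw [Finset.mul_sum]
    rw [e1]
    have e2 : (∫ y, h y ^ 2 ∂μ) * r = ∫ y, h y ^ 2 * r ∂μ := by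
      rw [integral_mul_const]
    rw [e2]
    apply integral_mono_ae
    · exact (integrable_finset_sum _ (fun k _ => hffw k)).congr
        (by filter_upwards with y; rw [Finset.mul_sum])
    · exact hsq.mul_const r
    · filter_upwards [hae] with y hy
      exact mul_le_mul_of_nonneg_left (hg_sum y hy) (sq_nonneg _)
  -- assemble
  have hI0 : 0 ≤ ∫ y, h y ^ 2 ∂μ := integral_nonneg (fun y => sq_nonneg _)
  have step : ∑ k : Fin N, (∫ y, h y * g k y ∂μ) ^ 2 ≤ 2 / N * r * ((∫ y, h y ^ 2 ∂μ) * r) := by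
    calc ∑ k : Fin N, (∫ y, h y * g k y ∂μ) ^ 2
        ≤ ∑ k : Fin N, 2 / N * r * ∫ y, h y ^ 2 * g k y ∂μ := Finset.sum_le_sum (fun k _ => hperk k)
      _ = 2 / N * r * ∑ k : Fin N, ∫ y, h y ^ 2 * g k y ∂μ := by rw [Finset.mul_sum]
      _ ≤ 2 / N * r * ((∫ y, h y ^ 2 ∂μ) * r) := by
          apply mul_le_mul_of_nonneg_left hsum (by positivity)
  have final : (N:ℝ) ^ 2 * (2 / N * r * ((∫ y, h y ^ 2 ∂μ) * r)) = 2 * ∫ y, h y ^ 2 ∂μ := by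
    have : (N:ℝ) ^ 2 * (2 / N * r * ((∫ y, h y ^ 2 ∂μ) * r))
        = 2 * (∫ y, h y ^ 2 ∂μ) * ((N:ℝ) * (r * r)) * ((N:ℝ) / N) := by ring
    rw [this, hr2, div_self (ne_of_gt hN0), mul_inv_cancel₀ (ne_of_gt hN0)]
    ring
  calc (N : ℝ) ^ 2 * ∑ k : Fin N, (∫ y in Set.Ioc (0:ℝ) 1, h y * affInterp N (Pi.single k 1) y) ^ 2
      = (N:ℝ) ^ 2 * ∑ k : Fin N, (∫ y, h y * g k y ∂μ) ^ 2 := rfl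
    _ ≤ (N:ℝ) ^ 2 * (2 / N * r * ((∫ y, h y ^ 2 ∂μ) * r)) := by
        apply mul_le_mul_of_nonneg_left step (by positivity)
    _ = 2 * ∫ y, h y ^ 2 ∂μ := final
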